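/- Let p and q be real polynomials of degree at most d that satisfy |p(x_j) - q(x_j)| ≤ 2ε at d+1 points x_j chosen from L ≥ d+1 equally spaced points in [-Δ, Δ], Δ ∈ (0,1). Then |p(1) - q(1)| ≤ 2ε·exp(d(1 + log((1+1/Δ)(L-1)/d)))/√(2πd). -/

import Mathlib

/-!
Put `f = p - q`. Lagrange interpolation at the `d + 1` nodes `x_j` gives
`f 1 = ∑ᵢ f(xᵢ) ∏_{j ≠ i} (1 - x_j) / (x_i - x_j)`. Since the `a_j` are strictly
increasing integers, `|x_i - x_j| ≥ h |i - j|` with `h = 2Δ / (L - 1)`, while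
`|1 - x_j| ≤ 1 + Δ`; so the `i`-th weight is at most `((1 + Δ) / h)^d / (i! (d - i)!)`,
and these sum to
`((1 + Δ) / h)^d 2^d / d! = ((1 + 1/Δ)(L - 1))^d / d!`. Stirling's lower bound
`d! ≥ √(2πd) (d/e)^d` turns this into the stated exponential.
-/

open Polynomial Real Finset Nat

theorem Lagrange.eval_eq_sum_eval_mul_prod {F ι : Type*} [Field F] [DecidableEq ι]
    {s : Finset ι} {v : ι → F} {f : F[X]} (hvs : Set.InjOn v s) (hf : f.degree < #s) (t : F) :
    f.eval t = ∑ i ∈ s, f.eval (v i) * ∏ j ∈ s.erase i, (t - v j) / (v i - v j) := by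
  conv_lhs => rw [Lagrange.eq_interpolate hvs hf]
  simp only [Lagrange.interpolate_apply, eval_finsetSum, eval_mul, eval_C, Lagrange.basis,
    eval_prod, Lagrange.basisDivisor, eval_sub, eval_X, div_eq_inv_mul]

theorem StrictMonoOn.add_sub_le_of_Iic {a : ℕ → ℕ} {d : ℕ} (ha : StrictMonoOn a (Set.Iic d))
    {i j : ℕ} (hij : i ≤ j) (hjd : j ≤ d) : a i + (j - i) ≤ a j := by
  induction j, hij using Nat.le_induction with
  | base => simp
  | succ j hij ih =>
    have hstep : a j < a (j + 1) :=
      ha (Set.mem_Iic.2 (by omega)) (Set.mem_Iic.2 hjd) (Nat.lt_succ_self j)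
    have := ih (by omega)
    omega

theorem StrictMonoOn.abs_sub_le_abs_sub_of_Iic {a : ℕ → ℕ} {d : ℕ}
    (ha : StrictMonoOn a (Set.Iic d)) {i j : ℕ} (hi : i ≤ d) (hj : j ≤ d) :
    |(i : ℝ) - j| ≤ |(a i : ℝ) - a j| := by
  wlog hij : i ≤ j generalizing i j
  · rw [abs_sub_comm, abs_sub_comm (a i : ℝ)]
    exact this hj hi (by omega)
  have hgap : ((a i + (j - i) : ℕ) : ℝ) ≤ a j := by exact_mod_cast ha.add_sub_le_of_Iic hij hj
  have hij' : (i : ℝ) ≤ j := by exact_mod_cast hij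
  push_cast [hij] at hgap
  rw [abs_of_nonpos (by linarith), abs_of_nonpos (by linarith)]
  linarith

theorem prod_erase_range_abs_sub_eq_factorial_mul_factorial (d i : ℕ) (hi : i ≤ d) :
    ∏ j ∈ (range (d + 1)).erase i, |(i : ℝ) - j| = i ! * (d - i)! := by
  have hsplit : (range (d + 1)).erase i = range i ∪ Ico (i + 1) (d + 1) := by
    ext j; simp; omega
  have hbelow : ∏ j ∈ range i, |(i : ℝ) - j| = i ! := by
    rw [← Nat.descFactorial_self, Nat.descFactorial_eq_prod_range, Nat.cast_prod]
    refine prod_congr rfl fun j hj => ?_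
    have hji : j ≤ i := (mem_range.1 hj).le
    rw [Nat.cast_sub hji, abs_of_nonneg (sub_nonneg.2 (by exact_mod_cast hji))]
  have habove : ∏ j ∈ Ico (i + 1) (d + 1), |(i : ℝ) - j| = (d - i)! := by
    rw [prod_Ico_eq_prod_range, show d + 1 - (i + 1) = d - i by omega,
      ← prod_range_add_one_eq_factorial, Nat.cast_prod]
    refine prod_congr rfl fun k _ => ?_
    rw [abs_sub_comm, abs_of_nonneg (by push_cast; linarith)]
    push_cast; ring
  rw [hsplit, prod_union (disjoint_left.2 fun j h₁ h₂ => by simp at h₁ h₂; omega),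
    hbelow, habove]

theorem sum_range_inv_factorial_mul_factorial (d : ℕ) :
    ∑ i ∈ range (d + 1), ((i ! * (d - i)! : ℝ))⁻¹ = 2 ^ d / d ! := by
  have hterm : ∀ i ∈ range (d + 1), ((i ! * (d - i)! : ℝ))⁻¹ = d.choose i / d ! := by
    intro i hi
    rw [Nat.cast_choose ℝ (Nat.lt_succ_iff.1 (mem_range.1 hi))]
    field_simp
  rw [sum_congr rfl hterm, ← sum_div, ← Nat.cast_sum, Nat.sum_range_choose]
  push_cast; rfl

theorem pow_div_factorial_le_exp_div_sqrt {M : ℝ} (hM : 0 < M) {d : ℕ} (hd : d ≠ 0) :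
    M ^ d / d ! ≤ exp (d * (1 + log (M / d))) / √(2 * π * d) := by
  have hd' : (0 : ℝ) < d := by positivity
  have hexp : exp (d * (1 + log (M / d))) = M ^ d / (d / exp 1) ^ d := by
    rw [mul_add, mul_one, exp_add, exp_nat_mul, exp_log (by positivity), ← exp_one_pow,
      div_pow, div_pow]
    field_simp
  rw [hexp, div_div, mul_comm]
  exact div_le_div_of_nonneg_left (by positivity) (by positivity) (Stirling.le_factorial_stirling d)


section SeparatedNodes

variable {d : ℕ} {x : ℕ → ℝ} {h R t : ℝ}

theorem prod_abs_div_le_of_separated (hh : 0 < h)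
    (hsep : ∀ i ≤ d, ∀ j ≤ d, h * |(i : ℝ) - j| ≤ |x i - x j|)
    (hR : ∀ j ≤ d, |t - x j| ≤ R) {i : ℕ} (hi : i ≤ d) :
    ∏ j ∈ (range (d + 1)).erase i, |(t - x j) / (x i - x j)| ≤
      (R / h) ^ d / (i ! * (d - i)!) :=
  calc ∏ j ∈ (range (d + 1)).erase i, |(t - x j) / (x i - x j)|
      ≤ ∏ j ∈ (range (d + 1)).erase i, R / h / |(i : ℝ) - j| := by
        refine prod_le_prod (fun j _ => abs_nonneg _) fun j hj => ?_
        obtain ⟨hji, hj⟩ := mem_erase.1 hj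
        have hjd : j ≤ d := Nat.lt_succ_iff.1 (mem_range.1 hj)
        have hdist : 0 < |(i : ℝ) - j| := abs_pos.2 (sub_ne_zero.2 (by exact_mod_cast hji.symm))
        rw [abs_div, div_div]
        exact div_le_div₀ ((abs_nonneg _).trans (hR j hjd)) (hR j hjd) (by positivity)
          (hsep i hi j hjd)
    _ = (R / h) ^ d / (i ! * (d - i)!) := by
        rw [prod_div_distrib, prod_const, card_erase_of_mem (mem_range.2 (Nat.lt_succ_of_le hi)),
          card_range, Nat.succ_sub_one, prod_erase_range_abs_sub_eq_factorial_mul_factorial d i hi]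

theorem abs_eval_le_of_separated_nodes {f : ℝ[X]} (hf : f.natDegree ≤ d) {B : ℝ} (hh : 0 < h)
    (hsep : ∀ i ≤ d, ∀ j ≤ d, h * |(i : ℝ) - j| ≤ |x i - x j|)
    (hR : ∀ j ≤ d, |t - x j| ≤ R) (hB : ∀ i ≤ d, |f.eval (x i)| ≤ B) :
    |f.eval t| ≤ B * (2 * R / h) ^ d / d ! := by
  have hinj : Set.InjOn x (range (d + 1)) := by
    intro i hi j hj hxij
    have hsep_ij :=
      hsep i (Nat.lt_succ_iff.1 (mem_range.1 hi)) j (Nat.lt_succ_iff.1 (mem_range.1 hj))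
    rw [hxij, sub_self, abs_zero] at hsep_ij
    have : |(i : ℝ) - j| ≤ 0 := le_of_mul_le_mul_left (by simpa using hsep_ij) hh
    exact_mod_cast sub_eq_zero.1 (abs_nonpos_iff.1 this)
  have hdeg : f.degree < #(range (d + 1)) := by
    rw [card_range]
    exact degree_le_natDegree.trans_lt (by exact_mod_cast Nat.lt_succ_of_le hf)
  have hB0 : 0 ≤ B := (abs_nonneg _).trans (hB 0 d.zero_le)
  rw [Lagrange.eval_eq_sum_eval_mul_prod hinj hdeg t]
  calc _ ≤ ∑ i ∈ range (d + 1),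
        |f.eval (x i)| * ∏ j ∈ (range (d + 1)).erase i, |(t - x j) / (x i - x j)| :=
        (abs_sum_le_sum_abs _ _).trans_eq (by simp only [abs_mul, abs_prod])
    _ ≤ ∑ i ∈ range (d + 1), B * ((R / h) ^ d / (i ! * (d - i)!)) := by
        refine sum_le_sum fun i hi => ?_
        have hid := Nat.lt_succ_iff.1 (mem_range.1 hi)
        exact mul_le_mul (hB i hid) (prod_abs_div_le_of_separated hh hsep hR hid)
          (prod_nonneg fun j _ => abs_nonneg _) hB0
    _ = B * (2 * R / h) ^ d / d ! := by
        simp only [div_eq_mul_inv _ ((_ : ℝ) * _), ← mul_sum]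
        rw [sum_range_inv_factorial_mul_factorial]
        ring

end SeparatedNodes

noncomputable def equispacedNode (Δ : ℝ) (L k : ℕ) : ℝ := -Δ + (2 * k / (L - 1 : ℝ)) * Δ

theorem equispacedNode_sub (Δ : ℝ) (L k m : ℕ) :
    equispacedNode Δ L k - equispacedNode Δ L m = 2 * Δ / (L - 1) * (k - m) := by
  unfold equispacedNode
  ring

theorem abs_equispacedNode_le {Δ : ℝ} (hΔ : 0 ≤ Δ) {L k : ℕ} (hk : k ≤ L - 1) :
    |equispacedNode Δ L k| ≤ Δ := by
  rcases k.eq_zero_or_pos with rfl | hk0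
  · simp [equispacedNode, abs_of_nonneg hΔ]
  have hkL : (k : ℝ) + 1 ≤ L := by exact_mod_cast (by omega : k + 1 ≤ L)
  have hk1 : (1 : ℝ) ≤ k := by exact_mod_cast hk0
  have hfrac0 : 0 ≤ 2 * (k : ℝ) / (L - 1) := div_nonneg (by positivity) (by linarith)
  have hfrac2 : 2 * (k : ℝ) / (L - 1) ≤ 2 := by
    rw [div_le_iff₀ (by linarith)]
    linarith
  rw [equispacedNode, abs_le]
  constructor <;> nlinarith

theorem lagrange_extrapolation_difference_general (p q : Polynomial ℝ) (d L : ℕ) (ε Δ : ℝ)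
    (a : ℕ → ℕ)
    (hd1 : 1 ≤ d) (hp : p.natDegree ≤ d) (hq : q.natDegree ≤ d) (hL : d + 1 ≤ L)
    (hΔ0 : 0 < Δ)
    (ha : StrictMonoOn a (Set.Iic d)) (haL : ∀ j ≤ d, a j ≤ L - 1)
    (hb : ∀ j : ℕ, j ≤ d →
      |p.eval (-Δ + (2 * (a j) / (L - 1 : ℝ)) * Δ)
        - q.eval (-Δ + (2 * (a j) / (L - 1 : ℝ)) * Δ)| ≤ 2 * ε) :
    |p.eval 1 - q.eval 1| ≤
      2 * ε * Real.exp (d * (1 + Real.log ((1 + 1 / Δ) * (L - 1 : ℝ) / d))) /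
        Real.sqrt (2 * π * d) := by
  have hL1 : (0 : ℝ) < L - 1 := by
    have : (2 : ℝ) ≤ L := by exact_mod_cast (by omega : 2 ≤ L)
    linarith
  have hε : 0 ≤ ε := by linarith [(abs_nonneg _).trans (hb 0 d.zero_le)]
  have hsep : ∀ i ≤ d, ∀ j ≤ d, 2 * Δ / (L - 1) * |(i : ℝ) - j|
      ≤ |equispacedNode Δ L (a i) - equispacedNode Δ L (a j)| := by
    intro i hi j hj
    rw [equispacedNode_sub, abs_mul, abs_of_pos (show 0 < 2 * Δ / (L - 1) by positivity)]
    exact mul_le_mul_of_nonneg_left (ha.abs_sub_le_abs_sub_of_Iic hi hj) (by positivity)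
  have hR : ∀ j ≤ d, |1 - equispacedNode Δ L (a j)| ≤ 1 + Δ := fun j hj =>
    (abs_sub _ _).trans (by rw [abs_one]; linarith [abs_equispacedNode_le hΔ0.le (haL j hj)])
  have hbound := abs_eval_le_of_separated_nodes ((natDegree_sub_le p q).trans (max_le hp hq))
    (by positivity) hsep hR (fun i hi => by rw [eval_sub]; exact hb i hi)
  have hM : 2 * (1 + Δ) / (2 * Δ / (L - 1)) = (1 + 1 / Δ) * (L - 1) := by
    field_simp
    ring
  rw [eval_sub, hM, mul_div_assoc] at hbound
  refine hbound.trans ?_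
  rw [mul_div_assoc]
  exact mul_le_mul_of_nonneg_left
    (pow_div_factorial_le_exp_div_sqrt (by positivity) (by omega)) (by positivity)

/-- If two real polynomials of degree at most `d ≥ 1` satisfy `|p(x_j) - q(x_j)| ≤ 2ε`
at `d+1` nodes `x_j = -Δ + (2a_j/(L-1))Δ` chosen from `L ≥ d+1` equally-spaced points
in `[-Δ, Δ]`, `Δ ∈ (0,1)`, then
`|p(1) - q(1)| ≤ 2ε·exp(d(1 + log((1+1/Δ)(L-1)/d)))/√(2πd)`. -/
theorem lagrange_extrapolation_difference (p q : Polynomial ℝ) (d L : ℕ) (ε Δ : ℝ)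
    (a : ℕ → ℕ)
    (hd1 : 1 ≤ d) (hp : p.natDegree ≤ d) (hq : q.natDegree ≤ d) (hL : d + 1 ≤ L)
    (hΔ0 : 0 < Δ) (hΔ1 : Δ < 1)
    (ha : StrictMonoOn a (Set.Iic d)) (haL : ∀ j ≤ d, a j ≤ L - 1)
    (hb : ∀ j : ℕ, j ≤ d →
      |p.eval (-Δ + (2 * (a j) / (L - 1 : ℝ)) * Δ)
        - q.eval (-Δ + (2 * (a j) / (L - 1 : ℝ)) * Δ)| ≤ 2 * ε) :
    |p.eval 1 - q.eval 1| ≤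
      2 * ε * Real.exp (d * (1 + Real.log ((1 + 1 / Δ) * (L - 1 : ℝ) / d))) /
        Real.sqrt (2 * π * d) :=
  lagrange_extrapolation_difference_general p q d L ε Δ a hd1 hp hq hL hΔ0 ha haL hb
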